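/- arXiv:math/0510464 — 5 statements merged into one kernel-verified Lean document; each statement's English description precedes it below -/
import Mathlib

section
/- Let A be a bounded operator with A - A* = 2iKK* (scattering case J = I), A_R = (A + A*)/2, and F an orthogonal projection. Define W(z) = I - 2iK*(A - zF)^{-1}K and V(z) = K*(A_R - zF)^{-1}K. Then for every z at which both (A - zF)^{-1} and (A_R - zF)^{-1} exist, (I + W(z))(I + iV(z)) = 2I. -/
open ContinuousLinearMap

theorem stmt_6 {H E : Type*}
    [NormedAddCommGroup H] [InnerProductSpace ℂ H] [CompleteSpace H]
    [NormedAddCommGroup E] [InnerProductSpace ℂ E] [CompleteSpace E]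
    (A F : H →L[ℂ] H) (K : E →L[ℂ] H)
    (hA : A - ContinuousLinearMap.adjoint A
      = (2 * Complex.I) • (K ∘L ContinuousLinearMap.adjoint K))
    (hF1 : ContinuousLinearMap.adjoint F = F) (hF2 : F ∘L F = F)
    (AR : H →L[ℂ] H) (hAR : AR = (1 / 2 : ℂ) • (A + ContinuousLinearMap.adjoint A))
    (z : ℂ) (Rz RR : H →L[ℂ] H)
    (hRz1 : (A - z • F) ∘L Rz = 1) (hRz2 : Rz ∘L (A - z • F) = 1)
    (hRR1 : (AR - z • F) ∘L RR = 1) (hRR2 : RR ∘L (AR - z • F) = 1)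
    (W V : E →L[ℂ] E)
    (hW : W = 1 - (2 * Complex.I) • (ContinuousLinearMap.adjoint K ∘L Rz ∘L K))
    (hV : V = ContinuousLinearMap.adjoint K ∘L RR ∘L K) :
    (1 + W) * (1 + Complex.I • V) = (2 : ℂ) • (1 : E →L[ℂ] E) := by
  set Kd := ContinuousLinearMap.adjoint K with hKd
  set B := K ∘L Kd with hB
  set T : E →L[ℂ] E := Kd ∘L Rz ∘L K with hT
  have hAst : ContinuousLinearMap.adjoint A = A - (2*Complex.I) • B := by
    calc ContinuousLinearMap.adjoint A
        = A - (A - ContinuousLinearMap.adjoint A) := by abel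
      _ = A - (2*Complex.I) • B := by rw [hA]
  have hAdec : A - z • F = (AR - z • F) + Complex.I • B := by
    rw [hAR, hAst]; module
  have key : RR = Rz + Complex.I • ((Rz ∘L B) ∘L RR) := by
    calc RR = Rz ∘L ((A - z • F) ∘L RR) := by
          rw [← ContinuousLinearMap.comp_assoc, hRz2, ContinuousLinearMap.one_def,
            ContinuousLinearMap.id_comp]
      _ = Rz ∘L (((AR - z • F) + Complex.I • B) ∘L RR) := by rw [← hAdec]
      _ = Rz ∘L ((AR - z • F) ∘L RR) + Complex.I • ((Rz ∘L B) ∘L RR) := by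
          simp only [ContinuousLinearMap.add_comp, ContinuousLinearMap.comp_add,
            ContinuousLinearMap.smul_comp, ContinuousLinearMap.comp_smul,
            ContinuousLinearMap.comp_assoc]
      _ = Rz + Complex.I • ((Rz ∘L B) ∘L RR) := by
          rw [hRR1, ContinuousLinearMap.one_def, ContinuousLinearMap.comp_id]
  have hrel : V = T + Complex.I • (T * V) := by
    conv_lhs => rw [hV, key]
    rw [hV, hT, hB, ContinuousLinearMap.mul_def]
    simp only [ContinuousLinearMap.add_comp, ContinuousLinearMap.comp_add,
      ContinuousLinearMap.smul_comp, ContinuousLinearMap.comp_smul,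
      ContinuousLinearMap.comp_assoc]
  have h4 : T * V = Complex.I • (T - V) := by
    have h3 : Complex.I • (T * V) = V - T := by
      conv_rhs => rw [hrel]
      module
    calc T * V = (-Complex.I) • (Complex.I • (T * V)) := by
          rw [smul_smul]; simp [Complex.I_mul_I]
      _ = (-Complex.I) • (V - T) := by rw [h3]
      _ = Complex.I • (T - V) := by module
  rw [hW]
  simp only [mul_add, add_mul, mul_one, one_mul, sub_mul, mul_smul_comm,
    smul_mul_assoc, h4, smul_smul, Complex.I_mul_I]
  match_scalars
  · ring
  · linear_combination (-2 * Complex.I) * Complex.I_mul_I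
  · linear_combination (2 * Complex.I) * Complex.I_mul_I
end

section
/- Every self-adjoint operator Q on a finite-dimensional Hilbert space E admits a representation Q = K*(D - zF)^{-1}K valid for all z ∈ ℂ, where H = E ⊕ E, D is an invertible self-adjoint operator on H, F = 0, and K : E → H is injective. -/
/-! Take for D the block swap J = [[0, 1], [1, 0]], a self-adjoint involution, and K = (1, Q/2)ᵀ,
which is injective because of its identity block. Since F = 0 the resolvent is J⁻¹ = J for every z,
and K* J K = Q/2 + (Q/2)* = Q because Q is self-adjoint. -/

namespace Matrix

variable {m n α : Type*}

lemma isHermitian_fromBlocks_zero_one_one_zero [DecidableEq n] [Semiring α] [StarRing α] :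
    (fromBlocks 0 1 1 0 : Matrix (n ⊕ n) (n ⊕ n) α).IsHermitian :=
  isHermitian_zero.fromBlocks conjTranspose_one isHermitian_zero

lemma fromBlocks_zero_one_one_zero_mul_self [Fintype n] [DecidableEq n] [Semiring α] :
    (fromBlocks 0 1 1 0 : Matrix (n ⊕ n) (n ⊕ n) α) * fromBlocks 0 1 1 0 = 1 := by
  simp [fromBlocks_multiply, fromBlocks_one]

lemma mulVec_fromRows_one_injective [Fintype n] [DecidableEq n] [Semiring α]
    (B : Matrix m n α) : Function.Injective (fromRows (1 : Matrix n n α) B).mulVec := by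
  intro u v huv
  funext i
  simpa using congrFun huv (Sum.inl i)

lemma conjTranspose_fromRows_mul_fromBlocks_zero_one_one_zero_mul_fromRows [Fintype m]
    [DecidableEq m] [Semiring α] [StarRing α] (A B : Matrix m n α) :
    (fromRows A B)ᴴ * (fromBlocks 0 1 1 0 : Matrix (m ⊕ m) (m ⊕ m) α) * fromRows A B =
      Aᴴ * B + Bᴴ * A := by
  rw [conjTranspose_fromRows_eq_fromCols_conjTranspose, Matrix.mul_assoc,
    fromBlocks_mul_fromRows, fromCols_mul_fromRows]
  simp

end Matrix

open Matrix

theorem stmt_11 {n : ℕ} (Q : Matrix (Fin n) (Fin n) ℂ) (hQ : Q.IsHermitian) :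
    ∃ (D : Matrix (Fin n ⊕ Fin n) (Fin n ⊕ Fin n) ℂ)
      (K : Matrix (Fin n ⊕ Fin n) (Fin n) ℂ),
      D.IsHermitian ∧ IsUnit D ∧ Function.Injective K.mulVec ∧
      ∀ z : ℂ,
        K.conjTranspose *
          (D - z • (0 : Matrix (Fin n ⊕ Fin n) (Fin n ⊕ Fin n) ℂ))⁻¹ * K = Q := by
  have hS := fromBlocks_zero_one_one_zero_mul_self (n := Fin n) (α := ℂ)
  refine ⟨fromBlocks 0 1 1 0, fromRows 1 ((2⁻¹ : ℂ) • Q), isHermitian_fromBlocks_zero_one_one_zero,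
    ⟨⟨_, _, hS, hS⟩, rfl⟩, mulVec_fromRows_one_injective _, fun z => ?_⟩
  rw [smul_zero, sub_zero, inv_eq_left_inv hS,
    conjTranspose_fromRows_mul_fromBlocks_zero_one_one_zero_mul_fromRows]
  simp only [conjTranspose_one, conjTranspose_smul, hQ.eq, Matrix.one_mul, Matrix.mul_one,
    star_inv₀, star_ofNat, ← add_smul]
  norm_num
end

section
/- Let L ≥ 0 on a finite-dimensional Hilbert space E. Set H = E ⊕ E, K = (P K̂, K̂)ᵀ with K̂ as above and P the projection onto ran L, D = [[0, iI],[-iI, 0]], F = [[0,0],[0,I]]. Then D is self-adjoint, F is an orthogonal projection, K is injective, D - zF is invertible for all z ∈ ℂ, and K*(D - zF)^{-1}K = zL. -/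
/-!
With `S` the square root of `L`, `ran S = ran (S * S) = ran L`, so the orthogonal projection `P`
satisfies `P * S = S * P = S`, and the defining properties of `K̂` say `K̂ = S + (1 - P)`.
Hence `P * K̂ = S` and `S * K̂ = L`. Since `(D - z F)⁻¹ = [[z, i], [-i, 0]]`, the compression
`K* (D - z F)⁻¹ K = z S*S + i (S K̂ - (S K̂)*)` equals `z L`.
-/

open scoped ComplexOrder

noncomputable def Matrix.PosSemidef.sqrt {n : Type*} [Fintype n] [DecidableEq n] {𝕜 : Type*}
    [RCLike 𝕜] {A : Matrix n n 𝕜} (hA : A.PosSemidef) : Matrix n n 𝕜 :=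
  hA.1.eigenvectorUnitary.1 * Matrix.diagonal ((↑) ∘ (√·) ∘ hA.1.eigenvalues) *
  (star hA.1.eigenvectorUnitary : Matrix n n 𝕜)

namespace Matrix

section RCLike

variable {n 𝕜 : Type*} [Fintype n] [RCLike 𝕜]

lemma PosSemidef.posSemidef_sqrt [DecidableEq n] {A : Matrix n n 𝕜} (hA : A.PosSemidef) :
    hA.sqrt.PosSemidef := by
  have hd : (diagonal ((↑) ∘ (√·) ∘ hA.1.eigenvalues) : Matrix n n 𝕜).PosSemidef :=
    posSemidef_diagonal_iff.mpr fun i => by simp [Real.sqrt_nonneg]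
  simpa [sqrt, star_eq_conjTranspose] using
    hd.mul_mul_conjTranspose_same (hA.1.eigenvectorUnitary : Matrix n n 𝕜)

lemma PosSemidef.sqrt_mul_self [DecidableEq n] {A : Matrix n n 𝕜} (hA : A.PosSemidef) :
    hA.sqrt * hA.sqrt = A := by
  have hd : (diagonal ((↑) ∘ (√·) ∘ hA.1.eigenvalues) : Matrix n n 𝕜) *
      diagonal ((↑) ∘ (√·) ∘ hA.1.eigenvalues) = diagonal (RCLike.ofReal ∘ hA.1.eigenvalues) := by
    rw [diagonal_mul_diagonal]
    congr 1
    funext i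
    simp [← RCLike.ofReal_mul, Real.mul_self_sqrt (hA.eigenvalues_nonneg i)]
  conv_rhs => rw [hA.1.spectral_theorem, Unitary.conjStarAlgAut_apply, ← hd]
  simp only [sqrt, Matrix.mul_assoc]
  rw [← Matrix.mul_assoc (star _ : Matrix n n 𝕜), Unitary.coe_star_mul_self, Matrix.one_mul]

lemma range_mulVecLin_mul_self {S : Matrix n n 𝕜} (hS : S.IsHermitian) :
    LinearMap.range (S * S).mulVecLin = LinearMap.range S.mulVecLin := by
  refine Submodule.eq_of_le_of_finrank_eq ?_ ?_
  · rw [mulVecLin_mul]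
    exact LinearMap.range_comp_le_range _ _
  · have h := rank_conjTranspose_mul_self S
    rw [hS.eq] at h
    exact h

end RCLike

section CommRing

variable {n R : Type*} [Fintype n] [CommRing R]

lemma mul_eq_right_of_range_le {P A : Matrix n n R} (hP : P * P = P)
    (h : LinearMap.range A.mulVecLin ≤ LinearMap.range P.mulVecLin) : P * A = A := by
  refine ext_iff_mulVec.2 fun v => ?_
  obtain ⟨w, hw⟩ := h ⟨v, rfl⟩
  simp only [mulVecLin_apply] at hw
  rw [← mulVec_mulVec, ← hw, mulVec_mulVec, hP]

lemma eq_mul_add_one_sub_of_mulVec_eq [DecidableEq n] {P M A : Matrix n n R} (hP : P * P = P)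
    (h_range : ∀ u ∈ LinearMap.range P.mulVecLin, M *ᵥ u = A *ᵥ u)
    (h_ker : ∀ u ∈ LinearMap.ker P.mulVecLin, M *ᵥ u = u) : M = A * P + (1 - P) := by
  refine ext_iff_mulVec.2 fun u => ?_
  have hPu : M *ᵥ (P *ᵥ u) = A *ᵥ (P *ᵥ u) := h_range _ ⟨u, rfl⟩
  have hu : M *ᵥ (u - P *ᵥ u) = u - P *ᵥ u :=
    h_ker _ (by simp [mulVec_sub, mulVec_mulVec, hP])
  calc M *ᵥ u = M *ᵥ (P *ᵥ u) + M *ᵥ (u - P *ᵥ u) := by rw [← mulVec_add, add_sub_cancel]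
    _ = (A * P + (1 - P)) *ᵥ u := by
      rw [hPu, hu, add_mulVec, sub_mulVec, one_mulVec, mulVec_mulVec]

lemma injective_mulVec_fromRows {S M L : Matrix n n R} (hSS : S * S = L)
    (h_ker : ∀ u ∈ LinearMap.ker L.mulVecLin, M *ᵥ u = u) :
    Function.Injective (fromRows S M).mulVec := by
  refine (injective_iff_map_eq_zero (fromRows S M).mulVecLin).2 fun u hu => ?_
  rw [mulVecLin_apply, fromRows_mulVec, ← Sum.elim_zero_zero, Sum.elim_eq_iff] at hu
  have hLu : u ∈ LinearMap.ker L.mulVecLin := by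
    rw [LinearMap.mem_ker, mulVecLin_apply, ← hSS, ← mulVec_mulVec, hu.1, mulVec_zero]
  rw [← h_ker u hLu, hu.2]

end CommRing

section SquareRootAndProjection

variable {n 𝕜 : Type*} [Fintype n] [RCLike 𝕜] {L S P : Matrix n n 𝕜}

lemma mul_eq_right_of_mul_self_eq (hS : S.IsHermitian) (hSS : S * S = L) (hPP : P * P = P)
    (hPL : LinearMap.range P.mulVecLin = LinearMap.range L.mulVecLin) : P * S = S :=
  mul_eq_right_of_range_le hPP <| by rw [hPL, ← hSS, range_mulVecLin_mul_self hS]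

lemma mul_eq_left_of_mul_self_eq (hS : S.IsHermitian) (hSS : S * S = L) (hP : P.IsHermitian)
    (hPP : P * P = P) (hPL : LinearMap.range P.mulVecLin = LinearMap.range L.mulVecLin) :
    S * P = S := by
  simpa [hS.eq, hP.eq] using congrArg conjTranspose (mul_eq_right_of_mul_self_eq hS hSS hPP hPL)

lemma eq_add_one_sub_of_mulVec_eq [DecidableEq n] {M : Matrix n n 𝕜} (hS : S.IsHermitian)
    (hSS : S * S = L) (hP : P.IsHermitian) (hPP : P * P = P)
    (hPL : LinearMap.range P.mulVecLin = LinearMap.range L.mulVecLin)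
    (h_ker : ∀ u ∈ LinearMap.ker L.mulVecLin, M *ᵥ u = u)
    (h_range : ∀ u ∈ LinearMap.range L.mulVecLin, M *ᵥ u = S *ᵥ u) : M = S + (1 - P) := by
  have hSP := mul_eq_left_of_mul_self_eq hS hSS hP hPP hPL
  have hLP : L * P = L := by rw [← hSS, Matrix.mul_assoc, hSP]
  rw [← hSP]
  refine eq_mul_add_one_sub_of_mulVec_eq hPP (hPL ▸ h_range) fun u hu => h_ker u ?_
  rw [LinearMap.mem_ker, mulVecLin_apply] at hu ⊢
  rw [← hLP, ← mulVec_mulVec, hu, mulVec_zero]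

end SquareRootAndProjection

section Blocks

variable {m : Type*} [DecidableEq m]

lemma isHermitian_fromBlocks_I :
    (fromBlocks 0 (Complex.I • 1) ((-Complex.I) • 1) 0 :
      Matrix (m ⊕ m) (m ⊕ m) ℂ).IsHermitian := by
  simp [IsHermitian, fromBlocks_conjTranspose, Complex.conj_I]

lemma fromBlocks_I_sub_smul_mul [Fintype m] (z : ℂ) :
    (fromBlocks 0 (Complex.I • 1) ((-Complex.I) • 1) 0 - z • fromBlocks 0 0 0 1 :
      Matrix (m ⊕ m) (m ⊕ m) ℂ) * fromBlocks (z • 1) (Complex.I • 1) ((-Complex.I) • 1) 0 = 1 := by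
  rw [fromBlocks_smul, sub_eq_add_neg, fromBlocks_neg, fromBlocks_add, fromBlocks_multiply,
    ← fromBlocks_one]
  simp [smul_smul, mul_comm]

lemma conjTranspose_fromRows_mul_fromBlocks_mul_fromRows [Fintype m] (z : ℂ) (S M : Matrix m m ℂ) :
    (fromRows S M)ᴴ * (fromBlocks (z • 1) (Complex.I • 1) ((-Complex.I) • 1) 0 :
      Matrix (m ⊕ m) (m ⊕ m) ℂ) * fromRows S M =
      z • (Sᴴ * S) + Complex.I • (Sᴴ * M - Mᴴ * S) := by
  rw [conjTranspose_fromRows_eq_fromCols_conjTranspose, fromCols_mul_fromBlocks,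
    fromCols_mul_fromRows]
  simp only [Matrix.mul_smul, Matrix.mul_one, Matrix.mul_zero, add_zero, Matrix.add_mul,
    Matrix.smul_mul]
  module

end Blocks

end Matrix

open Matrix in
theorem stmt_13 {n : ℕ} (L : Matrix (Fin n) (Fin n) ℂ) (hL : L.PosSemidef)
    (Khat : Matrix (Fin n) (Fin n) ℂ)
    (hK1 : ∀ u ∈ LinearMap.ker L.mulVecLin, Khat.mulVec u = u)
    (hK2 : ∀ u ∈ LinearMap.range L.mulVecLin, Khat.mulVec u = hL.sqrt.mulVec u)
    (P : Matrix (Fin n) (Fin n) ℂ)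
    (hP1 : P.IsHermitian) (hP2 : P * P = P)
    (hP3 : LinearMap.range P.mulVecLin = LinearMap.range L.mulVecLin)
    (D F : Matrix (Fin n ⊕ Fin n) (Fin n ⊕ Fin n) ℂ)
    (hD : D = Matrix.fromBlocks 0 (Complex.I • 1) ((-Complex.I) • 1) 0)
    (hF : F = Matrix.fromBlocks 0 0 0 1)
    (K : Matrix (Fin n ⊕ Fin n) (Fin n) ℂ)
    (hK : K = Matrix.fromRows (P * Khat) Khat) :
    D.IsHermitian ∧ F.IsHermitian ∧ F * F = F ∧
    Function.Injective K.mulVec ∧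
    ∀ z : ℂ, IsUnit (D - z • F) ∧
      K.conjTranspose * (D - z • F)⁻¹ * K = z • L := by
  set S := hL.sqrt
  have hS : S.IsHermitian := hL.posSemidef_sqrt.isHermitian
  have hSS : S * S = L := hL.sqrt_mul_self
  have hKhat : Khat = S + (1 - P) := eq_add_one_sub_of_mulVec_eq hS hSS hP1 hP2 hP3 hK1 hK2
  have hPK : P * Khat = S := by
    rw [hKhat, Matrix.mul_add, Matrix.mul_sub, mul_eq_right_of_mul_self_eq hS hSS hP2 hP3, hP2,
      Matrix.mul_one, sub_self, add_zero]
  have hSK : S * Khat = L := by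
    rw [hKhat, Matrix.mul_add, Matrix.mul_sub, hSS, mul_eq_left_of_mul_self_eq hS hSS hP1 hP2 hP3,
      Matrix.mul_one, sub_self, add_zero]
  have hKS : Khatᴴ * S = L := by simpa [hS.eq, hL.1.eq] using congrArg conjTranspose hSK
  subst hD hF hK
  refine ⟨isHermitian_fromBlocks_I, ?_, ?_, hPK ▸ injective_mulVec_fromRows hSS hK1, fun z => ?_⟩
  · simp [IsHermitian, fromBlocks_conjTranspose]
  · simp [fromBlocks_multiply]
  · have hinv := fromBlocks_I_sub_smul_mul (m := Fin n) z
    refine ⟨(isUnit_iff_isUnit_det _).2 (isUnit_det_of_right_inverse hinv), ?_⟩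
    rw [inv_eq_right_inv hinv, hPK, conjTranspose_fromRows_mul_fromBlocks_mul_fromRows, hS.eq, hSS,
      hSK, hKS, sub_self, smul_zero, add_zero]
end

section
/- Let A₀ be an invertible operator on a finite-dimensional Hilbert space E and consider the block operator N = i·[[2I + izA₀ - A₀, izA₀ - A₀],[A₀, A₀ + 2I]] on E ⊕ E. Then N is invertible if and only if 2i/z is not an eigenvalue of A₀ (equivalently, ker(2A₀^{-1} + izI) = {0}). -/
/-! The two block columns of `N / i` have the same sum, so subtracting the second block column
from the first and then adding the first block row to the second makes `N` block upper
triangular with diagonal blocks `2` and `iz A₀ + 2 = iz (A₀ - 2i/z)`. Hence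
`det N = (-1)ⁿ 2ⁿ (iz)ⁿ det (A₀ - 2i/z)`. -/

open Matrix

namespace Matrix

variable {m R : Type*} [Fintype m] [DecidableEq m] [CommRing R]

theorem det_fromBlocks_one_zero (X : Matrix m m R) :
    (fromBlocks 1 0 X 1 : Matrix (m ⊕ m) (m ⊕ m) R).det = 1 := by
  simp

theorem det_fromBlocks_of_add_eq_add {A B C D : Matrix m m R} (h : A + C = B + D) :
    (fromBlocks A B C D).det = (A - B).det * (B + D).det := by
  have hfactor : fromBlocks A B C D =
      fromBlocks 1 0 (-1) 1 * fromBlocks (A - B) B 0 (B + D) * fromBlocks 1 0 1 1 := by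
    simp only [fromBlocks_multiply, Matrix.one_mul, Matrix.mul_one, Matrix.zero_mul,
      Matrix.mul_zero, Matrix.neg_mul, add_zero, zero_add]
    congr 1 <;> [abel; (rw [eq_sub_of_add_eq' h]; abel); abel]
  rw [hfactor, det_mul, det_mul, det_fromBlocks_one_zero, det_fromBlocks_one_zero,
    det_fromBlocks_zero₂₁, one_mul, mul_one]

theorem exists_mulVec_eq_smul_iff_det_sub_eq_zero {K : Type*} [Field K] (A : Matrix m m K) (c : K) :
    (∃ x, x ≠ 0 ∧ A *ᵥ x = c • x) ↔ (A - c • 1).det = 0 := by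
  simp_rw [← exists_mulVec_eq_zero_iff, sub_mulVec, smul_mulVec, one_mulVec, sub_eq_zero]

end Matrix

theorem stmt_16_general {n : ℕ} (A₀ : Matrix (Fin n) (Fin n) ℂ)
    (z : ℂ) (hz : z ≠ 0)
    (N : Matrix (Fin n ⊕ Fin n) (Fin n ⊕ Fin n) ℂ)
    (hN : N = Complex.I •
      Matrix.fromBlocks ((2 : ℂ) • 1 + (Complex.I * z) • A₀ - A₀)
        ((Complex.I * z) • A₀ - A₀) A₀ (A₀ + (2 : ℂ) • 1)) :
    IsUnit N ↔ ¬ ∃ x : Fin n → ℂ, x ≠ 0 ∧ A₀.mulVec x = (2 * Complex.I / z) • x := by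
  have hIz : Complex.I * z ≠ 0 := mul_ne_zero Complex.I_ne_zero hz
  have hdiff : (2 : ℂ) • 1 + (Complex.I * z) • A₀ - A₀ - ((Complex.I * z) • A₀ - A₀) =
      (2 : ℂ) • 1 := by abel
  have hsum : (Complex.I * z) • A₀ - A₀ + (A₀ + (2 : ℂ) • 1) =
      (Complex.I * z) • (A₀ - (2 * Complex.I / z) • 1) := by
    have hscal : Complex.I * z * (2 * Complex.I / z) = -2 := by
      field_simp
      exact Complex.I_sq
    rw [smul_sub, smul_smul, hscal, neg_smul, sub_neg_eq_add]
    abel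
  rw [hN, isUnit_iff_isUnit_det, isUnit_iff_ne_zero, det_smul,
    det_fromBlocks_of_add_eq_add (by abel), hdiff, hsum, det_smul, det_smul,
    exists_mulVec_eq_smul_iff_det_sub_eq_zero]
  simp [hIz, Complex.I_ne_zero]

theorem stmt_16 {n : ℕ} (A₀ : Matrix (Fin n) (Fin n) ℂ) (hA : IsUnit A₀)
    (z : ℂ) (hz : z ≠ 0)
    (N : Matrix (Fin n ⊕ Fin n) (Fin n ⊕ Fin n) ℂ)
    (hN : N = Complex.I •
      Matrix.fromBlocks ((2 : ℂ) • 1 + (Complex.I * z) • A₀ - A₀)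
        ((Complex.I * z) • A₀ - A₀) A₀ (A₀ + (2 : ℂ) • 1)) :
    IsUnit N ↔ ¬ ∃ x : Fin n → ℂ, x ≠ 0 ∧ A₀.mulVec x = (2 * Complex.I / z) • x :=
  stmt_16_general A₀ z hz N hN
end

section
/- The scalar function V(z) = 1 + z - i·tanh(izl/2), for fixed l > 0, is a Herglotz-Nevanlinna function: it is holomorphic off ℝ, satisfies V(z̄) = conj(V(z)), and Im V(z) ≥ 0 for Im z > 0. -/
/-!
The substitution `w = i z l / 2` has `Re w = -l Im z / 2`, which vanishes only on the real axis,
so `cosh w ≠ 0` there and `tanh w` is holomorphic. Reflection symmetry follows from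
`tanh (conj w) = conj (tanh w)` and oddness of `tanh`. For the sign, `Im V z = Im z - Re (tanh w)`,
and `Re (tanh w) = sinh (2 Re w) / (2 |cosh w|²)` is `≤ 0` since `Re w ≤ 0` for `Im z > 0`.
-/

open Complex ComplexConjugate

namespace Complex

theorem cosh_ne_zero_of_re_ne_zero {w : ℂ} (hw : w.re ≠ 0) : cosh w ≠ 0 := by
  rw [← cos_mul_I, Ne, cos_eq_zero_iff]
  rintro ⟨k, hk⟩
  apply hw
  simpa using congrArg im hk

theorem differentiableAt_tanh {w : ℂ} (hw : cosh w ≠ 0) : DifferentiableAt ℂ tanh w := by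
  rw [show tanh = fun u => sinh u / cosh u from funext tanh_eq_sinh_div_cosh]
  exact (differentiable_sinh w).div (differentiable_cosh w) hw

theorem re_tanh (w : ℂ) : (tanh w).re = Real.sinh (2 * w.re) / (2 * normSq (cosh w)) := by
  have hprod : sinh w * conj (cosh w) = (sinh (w + conj w) + sinh (w - conj w)) / 2 := by
    rw [← cosh_conj, sinh_add, sinh_sub]; ring
  have hsum : w + conj w = ((2 * w.re : ℝ) : ℂ) := by rw [add_conj]
  have hdiff : w - conj w = ((2 * w.im : ℝ) : ℂ) * I := by rw [sub_conj]
  have hre : (sinh w * conj (cosh w)).re = Real.sinh (2 * w.re) / 2 := by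
    rw [hprod, hsum, hdiff, sinh_mul_I, ← ofReal_sinh, ← ofReal_sin, div_ofNat_re]
    simp only [add_re, ofReal_re, mul_I_re, ofReal_im, neg_zero, add_zero]
  rw [tanh_eq_sinh_div_cosh, div_re, ← add_div, div_mul_eq_div_div, ← hre]
  simp only [mul_re, conj_re, conj_im]
  ring

theorem re_tanh_nonpos {w : ℂ} (hw : w.re ≤ 0) : (tanh w).re ≤ 0 := by
  rw [re_tanh]
  exact div_nonpos_of_nonpos_of_nonneg (Real.sinh_nonpos_iff.mpr (by linarith))
    (mul_nonneg zero_le_two (normSq_nonneg _))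

theorem re_I_mul_mul_ofReal_div_two (z : ℂ) (l : ℝ) : (I * z * l / 2).re = -(z.im * l) / 2 := by
  simp [mul_re]

theorem I_mul_conj_mul_ofReal_div_two (z : ℂ) (l : ℝ) :
    I * conj z * l / 2 = -conj (I * z * l / 2) := by
  simp only [map_div₀, map_mul, conj_I, conj_ofReal, map_ofNat]
  ring

end Complex

theorem stmt_17 (l : ℝ) (hl : 0 < l)
    (V : ℂ → ℂ)
    (hV : V = fun z => 1 + z - Complex.I * Complex.tanh (Complex.I * z * l / 2)) :
    ∀ z : ℂ, z.im ≠ 0 →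
      DifferentiableAt ℂ V z ∧
      V (starRingEnd ℂ z) = starRingEnd ℂ (V z) ∧
      (0 < z.im → 0 ≤ (V z).im) := by
  intro z hz
  subst hV
  refine ⟨?_, ?_, fun hz_pos => ?_⟩
  · have hcosh : cosh (I * z * l / 2) ≠ 0 := by
      apply cosh_ne_zero_of_re_ne_zero
      rw [re_I_mul_mul_ofReal_div_two]
      exact div_ne_zero (neg_ne_zero.mpr (mul_ne_zero hz hl.ne')) two_ne_zero
    have htanh := (differentiableAt_tanh hcosh).comp (f := fun u : ℂ => I * u * l / 2) z
      (by fun_prop)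
    exact ((differentiableAt_const _).add differentiableAt_id).sub
      ((differentiableAt_const _).mul htanh)
  · simp only [I_mul_conj_mul_ofReal_div_two, tanh_neg, ← tanh_conj, map_sub, map_add, map_one,
      map_mul, conj_I]
    ring
  · have hre : (tanh (I * z * l / 2)).re ≤ 0 := by
      apply re_tanh_nonpos
      rw [re_I_mul_mul_ofReal_div_two]
      have := mul_pos hz_pos hl
      linarith
    simp only [sub_im, add_im, one_im, mul_im, I_re, I_im, zero_mul, one_mul, zero_add]
    linarith
end
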